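/- arXiv:1804.02584 — 5 statements merged into one kernel-verified Lean document; each statement's English description precedes it below -/
import Mathlib

section
/- Any point x in the matroid polytope P(M) can be written as a convex combination x = Σ_{i=1}^m β_i · 1_{B_i}, where each B_i is an independent set of M, each β_i ≥ 0, and Σ_i β_i = 1. -/
set_option linter.unusedSectionVars false
set_option linter.unnecessarySimpa false
set_option maxHeartbeats 1000000

/-- The rank of a set `A` in a matroid `M`: the largest cardinality of an independent
subset of `A`. -/
noncomputable def matroidRank {α : Type*} (M : Matroid α) (A : Set α) : ℕ :=
  sSup {n | ∃ I, I ⊆ A ∧ M.Indep I ∧ I.ncard = n}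

namespace MPD


variable {α : Type*} [Fintype α] [DecidableEq α] (M : Matroid α)

noncomputable def frk (A : Finset α) : ℕ := matroidRank M (A : Set α)

variable {M}

lemma rank_bdd {A : Finset α} :
    ∀ n ∈ {n | ∃ I, I ⊆ (A : Set α) ∧ M.Indep I ∧ I.ncard = n}, n ≤ A.card := by
  rintro n ⟨I, hIA, _, rfl⟩
  simpa [Set.ncard_coe_finset] using Set.ncard_le_ncard hIA A.finite_toSet

lemma card_le_frk {A B : Finset α} (hB : M.Indep (B : Set α)) (hBA : B ⊆ A) :
    B.card ≤ frk M A := by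
  refine le_csSup ⟨A.card, rank_bdd⟩ ?_
  exact ⟨(B : Set α), by exact_mod_cast hBA, hB, Set.ncard_coe_finset B⟩

lemma frk_le_card (A : Finset α) : frk M A ≤ A.card := by
  refine csSup_le ⟨0, ∅, by simp, M.empty_indep, by simp⟩ rank_bdd

lemma frk_empty : frk M (∅ : Finset α) = 0 := by
  have := frk_le_card (M := M) (∅ : Finset α)
  simpa using this

lemma exists_frk_basis (A : Finset α) :
    ∃ B : Finset α, B ⊆ A ∧ M.Indep (B : Set α) ∧ B.card = frk M A := by
  have hmem : frk M A ∈ {n | ∃ I, I ⊆ (A : Set α) ∧ M.Indep I ∧ I.ncard = n} := by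
    refine Nat.sSup_mem ⟨0, ∅, by simp, M.empty_indep, by simp⟩ ⟨A.card, rank_bdd⟩
  obtain ⟨I, hIA, hind, hcard⟩ := hmem
  have hfin : I.Finite := Set.toFinite I
  refine ⟨hfin.toFinset, ?_, by rwa [hfin.coe_toFinset], ?_⟩
  · intro e he; rw [Set.Finite.mem_toFinset] at he; exact_mod_cast hIA he
  · rw [← hcard, Set.ncard_eq_toFinset_card I hfin]

lemma frk_mono {A A' : Finset α} (h : A ⊆ A') : frk M A ≤ frk M A' := by
  obtain ⟨B, hBA, hind, hcard⟩ := exists_frk_basis (M := M) A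
  rw [← hcard]; exact card_le_frk hind (hBA.trans h)

lemma exists_frk_extend (A : Finset α) :
    ∀ (k : ℕ) (B : Finset α), frk M A - B.card ≤ k → M.Indep (B : Set α) → B ⊆ A →
    ∃ B', B ⊆ B' ∧ B' ⊆ A ∧ M.Indep (B' : Set α) ∧ B'.card = frk M A := by
  intro k
  induction k with
  | zero =>
    intro B hk hB hBA
    have h1 := card_le_frk hB hBA
    exact ⟨B, subset_rfl, hBA, hB, by omega⟩
  | succ k ih =>
    intro B hk hB hBA
    have h1 := card_le_frk hB hBA
    by_cases hcase : B.card = frk M A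
    · exact ⟨B, subset_rfl, hBA, hB, hcase⟩
    · obtain ⟨J, hJA, hJind, hJcard⟩ := exists_frk_basis (M := M) A
      have hlt : (B : Set α).encard < (J : Set α).encard := by
        rw [Set.encard_coe_eq_coe_finsetCard, Set.encard_coe_eq_coe_finsetCard]
        exact_mod_cast lt_of_le_of_ne h1 hcase |>.trans_eq hJcard.symm
      obtain ⟨e, he, hins⟩ := hB.augment hJind hlt
      have heJ : e ∈ J := by exact_mod_cast he.1
      have heB : e ∉ B := by simpa using he.2
      have hBA' : insert e B ⊆ A := Finset.insert_subset (hJA heJ) hBA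
      have hind' : M.Indep ((insert e B : Finset α) : Set α) := by
        rwa [Finset.coe_insert]
      have hcard' : (insert e B).card = B.card + 1 := Finset.card_insert_of_notMem heB
      obtain ⟨B', h1', h2', h3', h4'⟩ := ih (insert e B) (by omega) hind' hBA'
      exact ⟨B', (Finset.subset_insert e B).trans h1', h2', h3', h4'⟩

lemma frk_submod (A C : Finset α) :
    frk M (A ∪ C) + frk M (A ∩ C) ≤ frk M A + frk M C := by
  obtain ⟨I, hIsub, hIind, hIcard⟩ := exists_frk_basis (M := M) (A ∩ C)
  have hIAC : I ⊆ A ∪ C := hIsub.trans (Finset.inter_subset_left.trans Finset.subset_union_left)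
  obtain ⟨J, hIJ, hJsub, hJind, hJcard⟩ :=
    exists_frk_extend (A ∪ C) (frk M (A ∪ C)) I (by omega) hIind hIAC
  have hIJint : I ⊆ J ∩ (A ∩ C) := Finset.subset_inter hIJ hIsub
  have hkey : J.card + (J ∩ (A ∩ C)).card = (J ∩ A).card + (J ∩ C).card := by
    have h1 : (J ∩ A) ∪ (J ∩ C) = J := by
      rw [← Finset.inter_union_distrib_left]
      exact Finset.inter_eq_left.2 hJsub
    have h2 : (J ∩ A) ∩ (J ∩ C) = J ∩ (A ∩ C) := by
      ext e; simp only [Finset.mem_inter]; tauto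
    have := Finset.card_union_add_card_inter (J ∩ A) (J ∩ C)
    rw [h1, h2] at this; omega
  have hJA : (J ∩ A).card ≤ frk M A := by
    refine card_le_frk (hJind.subset ?_) Finset.inter_subset_right
    exact_mod_cast (Finset.inter_subset_left : J ∩ A ⊆ J)
  have hJC : (J ∩ C).card ≤ frk M C := by
    refine card_le_frk (hJind.subset ?_) Finset.inter_subset_right
    exact_mod_cast (Finset.inter_subset_left : J ∩ C ⊆ J)
  have hI' : I.card ≤ (J ∩ (A ∩ C)).card := Finset.card_le_card hIJint
  omega


variable (M) in
/-- `A` is a tight set for `x`. -/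
def Tight (x : α → ℝ) (A : Finset α) : Prop := ∑ e ∈ A, x e = (frk M A : ℝ)

/-- support of `x` -/
noncomputable def suppF (x : α → ℝ) : Finset α := Finset.univ.filter (fun e => ¬ (x e = 0))

lemma mem_suppF {x : α → ℝ} {e : α} : e ∈ suppF x ↔ x e ≠ 0 := by
  simp [suppF]

section TightFacts
variable {x : α → ℝ} (hx0 : ∀ e, 0 ≤ x e)
  (hxP : ∀ A : Finset α, ∑ e ∈ A, x e ≤ (frk M A : ℝ))

include hxP

lemma tight_empty : Tight M x ∅ := by
  simp [Tight, frk_empty]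

lemma modularity {A C : Finset α} (hA : Tight M x A) (hC : Tight M x C) :
    Tight M x (A ∪ C) ∧ Tight M x (A ∩ C) ∧
      frk M (A ∪ C) + frk M (A ∩ C) = frk M A + frk M C := by
  have hsum : ∑ e ∈ A ∪ C, x e + ∑ e ∈ A ∩ C, x e = ∑ e ∈ A, x e + ∑ e ∈ C, x e :=
    Finset.sum_union_inter
  have h1 := hxP (A ∪ C)
  have h2 := hxP (A ∩ C)
  have h3 : (frk M (A ∪ C) : ℝ) + frk M (A ∩ C) ≤ (frk M A : ℝ) + frk M C := by
    exact_mod_cast frk_submod A C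
  rw [Tight] at hA hC
  have e1 : ∑ e ∈ A ∪ C, x e = (frk M (A ∪ C) : ℝ) := by linarith
  have e2 : ∑ e ∈ A ∩ C, x e = (frk M (A ∩ C) : ℝ) := by linarith
  refine ⟨e1, e2, ?_⟩
  have : (frk M (A ∪ C) : ℝ) + frk M (A ∩ C) = (frk M A : ℝ) + frk M C := by linarith
  exact_mod_cast this

lemma tight_inter_supp {A : Finset α} (hA : Tight M x A) :
    Tight M x (A ∩ suppF x) ∧ frk M (A ∩ suppF x) = frk M A := by
  have hsum : ∑ e ∈ A ∩ suppF x, x e = ∑ e ∈ A, x e := by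
    refine Finset.sum_subset Finset.inter_subset_left ?_
    intro e heA he
    by_contra hne
    exact he (Finset.mem_inter.2 ⟨heA, mem_suppF.2 hne⟩)
  have h2 := hxP (A ∩ suppF x)
  rw [Tight] at hA
  have hle : (frk M A : ℝ) ≤ (frk M (A ∩ suppF x) : ℝ) := by
    rw [← hA, ← hsum]; exact h2
  have hge : frk M (A ∩ suppF x) ≤ frk M A := frk_mono Finset.inter_subset_left
  have heq : frk M (A ∩ suppF x) = frk M A :=
    le_antisymm hge (by exact_mod_cast hle)
  exact ⟨by rw [Tight, hsum, hA, heq], heq⟩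

end TightFacts

section Pack
variable {x : α → ℝ}
  (hxP : ∀ A : Finset α, ∑ e ∈ A, x e ≤ (frk M A : ℝ))

include hxP

lemma G_union {A C B : Finset α} (hB : M.Indep (B : Set α))
    (hA : Tight M x A) (hC : Tight M x C)
    (h1 : (A ∩ B).card = frk M A) (h2 : (C ∩ B).card = frk M C) :
    ((A ∪ C) ∩ B).card = frk M (A ∪ C) ∧ ((A ∩ C) ∩ B).card = frk M (A ∩ C) := by
  obtain ⟨-, -, hmod⟩ := modularity hxP hA hC
  have hcards : ((A ∪ C) ∩ B).card + ((A ∩ C) ∩ B).card = (A ∩ B).card + (C ∩ B).card := by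
    have e1 : (A ∩ B) ∪ (C ∩ B) = (A ∪ C) ∩ B := (Finset.union_inter_distrib_right A C B).symm
    have e2 : (A ∩ B) ∩ (C ∩ B) = (A ∩ C) ∩ B := by ext e; simp only [Finset.mem_inter]; tauto
    have := Finset.card_union_add_card_inter (A ∩ B) (C ∩ B)
    rw [e1, e2] at this; omega
  have b1 : ((A ∪ C) ∩ B).card ≤ frk M (A ∪ C) := by
    refine card_le_frk (hB.subset ?_) Finset.inter_subset_left
    exact_mod_cast (Finset.inter_subset_right : (A ∪ C) ∩ B ⊆ B)
  have b2 : ((A ∩ C) ∩ B).card ≤ frk M (A ∩ C) := by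
    refine card_le_frk (hB.subset ?_) Finset.inter_subset_left
    exact_mod_cast (Finset.inter_subset_right : (A ∩ C) ∩ B ⊆ B)
  omega

lemma sup_tight_card {B : Finset α} (hB : M.Indep (B : Set α))
    (𝓚 : Finset (Finset α))
    (h : ∀ P ∈ 𝓚, Tight M x P ∧ (P ∩ B).card = frk M P) :
    Tight M x (𝓚.sup id) ∧ ((𝓚.sup id ∩ B).card = frk M (𝓚.sup id)) := by
  classical
  induction 𝓚 using Finset.induction_on with
  | empty =>
    constructor <;> simp [Tight, frk_empty, Finset.bot_eq_empty]
  | @insert P 𝓚' _ ih =>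
    have hP' := h P (Finset.mem_insert_self P 𝓚')
    have ih' := ih (fun Q hQ => h Q (Finset.mem_insert_of_mem hQ))
    rw [Finset.sup_insert]
    have hGU := G_union hxP hB hP'.1 ih'.1 hP'.2 ih'.2
    exact ⟨(modularity hxP hP'.1 ih'.1).1, hGU.1⟩

/-- the invariant carried by the incremental construction of a common basis -/
def Pack (M : Matroid α) (x : α → ℝ) (𝓕 : Finset (Finset α)) : Prop :=
  ∃ B : Finset α, M.Indep (B : Set α) ∧ B ⊆ 𝓕.sup id ∩ suppF x ∧
    B.card = frk M (𝓕.sup id) ∧ ∀ A ∈ 𝓕, (A ∩ B).card = frk M A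

lemma pack_empty : Pack M x (∅ : Finset (Finset α)) := by
  refine ⟨∅, by simpa using M.empty_indep, by simp, by simp [frk_empty, Finset.bot_eq_empty], by simp⟩

lemma pack_insert {𝓕 : Finset (Finset α)} {A : Finset α}
    (h𝓕 : ∀ P ∈ 𝓕, Tight M x P) (hA : Tight M x A)
    (habs : ∀ P ∈ 𝓕, A ∩ P ∈ 𝓕) (hp : Pack M x 𝓕) :
    Pack M x (insert A 𝓕) := by
  classical
  obtain ⟨B, hBind, hBsub, hBcard, hBall⟩ := hp
  set W := 𝓕.sup id with hW
  have hWtight : Tight M x W := by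
    exact (sup_tight_card hxP hBind 𝓕 (fun P hP => ⟨h𝓕 P hP, hBall P hP⟩)).1
  have hWB : (W ∩ B).card = frk M W := by
    have : W ∩ B = B := Finset.inter_eq_right.2 (hBsub.trans Finset.inter_subset_left)
    rw [this, hBcard]
  have hEt : Tight M x (A ∪ W) := (modularity hxP hA hWtight).1
  have hmod : frk M (A ∪ W) + frk M (A ∩ W) = frk M A + frk M W :=
    (modularity hxP hA hWtight).2.2
  -- extend B to a basis of (A ∪ W) ∩ supp
  have hSsub : B ⊆ (A ∪ W) ∩ suppF x := by
    refine hBsub.trans (Finset.inter_subset_inter ?_ subset_rfl)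
    exact Finset.subset_union_right
  have hfrkS : frk M ((A ∪ W) ∩ suppF x) = frk M (A ∪ W) :=
    (tight_inter_supp hxP hEt).2
  obtain ⟨B', hBB', hB'sub, hB'ind, hB'card⟩ :=
    exists_frk_extend ((A ∪ W) ∩ suppF x) (frk M ((A ∪ W) ∩ suppF x)) B
      (by omega) hBind hSsub
  rw [hfrkS] at hB'card
  -- D = A ∩ W handled via the union closure
  have hD : Tight M x (A ∩ W) ∧ ((A ∩ W) ∩ B).card = frk M (A ∩ W) := by
    have himg : (𝓕.image (fun P => A ∩ P)).sup id = A ∩ W := by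
      rw [Finset.sup_image, hW]
      simpa using (Finset.sup_inf_distrib_left 𝓕 id A).symm
    have := sup_tight_card hxP hBind (𝓕.image (fun P => A ∩ P)) ?_
    · rwa [himg] at this
    · intro Q hQ
      obtain ⟨P, hP, rfl⟩ := Finset.mem_image.1 hQ
      exact ⟨h𝓕 _ (habs P hP), hBall _ (habs P hP)⟩
  -- generic: membership card only grows, capped by rank
  have hgrow : ∀ P : Finset α, (P ∩ B).card = frk M P → (P ∩ B').card = frk M P := by
    intro P hPB
    have hle : (P ∩ B').card ≤ frk M P := by
      refine card_le_frk (hB'ind.subset ?_) Finset.inter_subset_left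
      exact_mod_cast (Finset.inter_subset_right : P ∩ B' ⊆ B')
    have hge : (P ∩ B).card ≤ (P ∩ B').card :=
      Finset.card_le_card (Finset.inter_subset_inter subset_rfl hBB')
    omega
  have hWB' : (W ∩ B').card = frk M W := hgrow W hWB
  have hDB' : ((A ∩ W) ∩ B').card = frk M (A ∩ W) := hgrow _ hD.2
  have hEB' : ((A ∪ W) ∩ B').card = frk M (A ∪ W) := by
    have : (A ∪ W) ∩ B' = B' :=
      Finset.inter_eq_right.2 (hB'sub.trans Finset.inter_subset_left)
    rw [this, hB'card]
  have hAB' : (A ∩ B').card = frk M A := by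
    have hcards : ((A ∪ W) ∩ B').card + ((A ∩ W) ∩ B').card
        = (A ∩ B').card + (W ∩ B').card := by
      have e1 : (A ∩ B') ∪ (W ∩ B') = (A ∪ W) ∩ B' := (Finset.union_inter_distrib_right A W B').symm
      have e2 : (A ∩ B') ∩ (W ∩ B') = (A ∩ W) ∩ B' := by
        ext e; simp only [Finset.mem_inter]; tauto
      have := Finset.card_union_add_card_inter (A ∩ B') (W ∩ B')
      rw [e1, e2] at this; omega
    omega
  refine ⟨B', hB'ind, ?_, ?_, ?_⟩
  · rwa [Finset.sup_insert, id] 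
  · rw [Finset.sup_insert, id]; exact hB'card
  · intro P hP
    rcases Finset.mem_insert.1 hP with rfl | hP'
    · exact hAB'
    · exact hgrow P (hBall P hP')

end Pack

section CB
variable {x : α → ℝ}
  (hxP : ∀ A : Finset α, ∑ e ∈ A, x e ≤ (frk M A : ℝ))

open Classical in
noncomputable def tightLt (M : Matroid α) (x : α → ℝ) (m : ℕ) : Finset (Finset α) :=
  Finset.univ.filter (fun A => Tight M x A ∧ A.card < m)

open Classical in
noncomputable def tightEq (M : Matroid α) (x : α → ℝ) (m : ℕ) : Finset (Finset α) :=
  Finset.univ.filter (fun A => Tight M x A ∧ A.card = m)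

lemma mem_tightLt {m : ℕ} {A : Finset α} :
    A ∈ tightLt M x m ↔ Tight M x A ∧ A.card < m := by
  classical simp [tightLt]

lemma mem_tightEq {m : ℕ} {A : Finset α} :
    A ∈ tightEq M x m ↔ Tight M x A ∧ A.card = m := by
  classical simp [tightEq]

include hxP

lemma pack_tightLt : ∀ m : ℕ, Pack M x (tightLt M x m) := by
  intro m
  induction m with
  | zero =>
    have : tightLt M x 0 = ∅ := by
      ext A; simp [mem_tightLt]
    rw [this]; exact pack_empty hxP
  | succ m ih =>
    have inner : ∀ 𝓗 : Finset (Finset α), 𝓗 ⊆ tightEq M x m →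
        Pack M x (tightLt M x m ∪ 𝓗) := by
      intro 𝓗
      induction 𝓗 using Finset.induction_on with
      | empty => intro _; simpa using ih
      | @insert A 𝓗' hA𝓗 ih' =>
        intro hsub
        rw [Finset.union_insert]
        have hAm : Tight M x A ∧ A.card = m :=
          mem_tightEq.1 (hsub (Finset.mem_insert_self A 𝓗'))
        have htight : ∀ P ∈ tightLt M x m ∪ 𝓗', Tight M x P := by
          intro P hP
          rcases Finset.mem_union.1 hP with h | h
          · exact (mem_tightLt.1 h).1
          · exact (mem_tightEq.1 (hsub (Finset.mem_insert_of_mem h))).1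
        refine pack_insert hxP htight hAm.1 ?_ (ih' (fun Q hQ => hsub (Finset.mem_insert_of_mem hQ)))
        intro P hP
        refine Finset.mem_union_left _ (mem_tightLt.2 ⟨(modularity hxP hAm.1 (htight P hP)).2.1, ?_⟩)
        have hle : (A ∩ P).card ≤ A.card := Finset.card_le_card Finset.inter_subset_left
        rcases Finset.mem_union.1 hP with h | h
        · have : (A ∩ P).card ≤ P.card := Finset.card_le_card Finset.inter_subset_right
          have := (mem_tightLt.1 h).2
          omega
        · have hPm := (mem_tightEq.1 (hsub (Finset.mem_insert_of_mem h))).2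
          have hne : A ≠ P := fun hEq => hA𝓗 (hEq ▸ h)
          by_contra hc
          have hAPm : (A ∩ P).card = m := by omega
          have h1 : A ∩ P = A :=
            Finset.eq_of_subset_of_card_le Finset.inter_subset_left (by omega)
          have hAP : A ⊆ P := by rw [← h1]; exact Finset.inter_subset_right
          exact hne (Finset.eq_of_subset_of_card_le hAP (by omega))
    have hsplit : tightLt M x (m + 1) = tightLt M x m ∪ tightEq M x m := by
      ext A
      simp only [mem_tightLt, Finset.mem_union, mem_tightEq]
      constructor
      · rintro ⟨h1, h2⟩
        rcases Nat.lt_succ_iff_lt_or_eq.1 h2 with h | h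
        · exact Or.inl ⟨h1, h⟩
        · exact Or.inr ⟨h1, h⟩
      · rintro (⟨h1, h2⟩ | ⟨h1, h2⟩) <;> exact ⟨h1, by omega⟩
    rw [hsplit]
    exact inner _ subset_rfl

lemma exists_commonBasis :
    ∃ B : Finset α, M.Indep (B : Set α) ∧ B ⊆ suppF x ∧
      ∀ A : Finset α, Tight M x A → (A ∩ B).card = frk M A := by
  obtain ⟨B, h1, h2, h3, h4⟩ := pack_tightLt hxP (Fintype.card α + 1)
  refine ⟨B, h1, h2.trans Finset.inter_subset_right, fun A hA => h4 A ?_⟩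
  refine mem_tightLt.2 ⟨hA, ?_⟩
  have := Finset.card_le_univ A
  omega

end CB


variable {α : Type*} [Fintype α] [DecidableEq α] {M : Matroid α}

open Classical in
theorem main_aux : ∀ (n : ℕ) (x : α → ℝ), (∀ e, 0 ≤ x e) →
    (∀ A : Finset α, ∑ e ∈ A, x e ≤ (frk M A : ℝ)) →
    (suppF x).card + (Finset.univ.filter (fun A : Finset α => ¬ Tight M x A)).card ≤ n →
    ∃ (m : ℕ) (β : Fin m → ℝ) (B : Fin m → Finset α),
      (∀ i, 0 ≤ β i) ∧ (∀ i, M.Indep (B i : Set α)) ∧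
      (∑ i, β i = 1) ∧
      ∀ e, x e = ∑ i, β i * (if e ∈ B i then (1 : ℝ) else 0) := by
  have zerocase : ∀ x : α → ℝ, suppF x = ∅ →
      ∃ (m : ℕ) (β : Fin m → ℝ) (B : Fin m → Finset α),
      (∀ i, 0 ≤ β i) ∧ (∀ i, M.Indep (B i : Set α)) ∧
      (∑ i, β i = 1) ∧
      ∀ e, x e = ∑ i, β i * (if e ∈ B i then (1 : ℝ) else 0) := by
    intro x hsupp
    have hx0' : ∀ e, x e = 0 := by
      intro e; by_contra h
      have : e ∈ suppF x := mem_suppF.2 h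
      simp [hsupp] at this
    refine ⟨1, fun _ => 1, fun _ => ∅, fun _ => zero_le_one, fun _ => by simpa using M.empty_indep,
      by simp, fun e => by simp [hx0' e]⟩
  intro n
  induction n with
  | zero =>
    intro x hx0 hxP hn
    have hsupp : suppF x = ∅ := Finset.card_eq_zero.1 (by omega)
    exact zerocase x hsupp
  | succ n ih =>
    intro x hx0 hxP hn
    by_cases hsupp : suppF x = ∅
    · exact zerocase x hsupp
    obtain ⟨B, hBind, hBsupp, hBtight⟩ := exists_commonBasis hxP
    have hcardle : ∀ A : Finset α, (A ∩ B).card ≤ frk M A := fun A =>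
      card_le_frk (hBind.subset (by exact_mod_cast (Finset.inter_subset_right : A ∩ B ⊆ B)))
        Finset.inter_subset_left
    set 𝓝 : Finset (Finset α) :=
      Finset.univ.filter (fun A : Finset α => ¬ Tight M x A ∧ (A ∩ B).card < frk M A) with h𝓝
    set q : Finset α → ℝ :=
      fun A => ((frk M A : ℝ) - ∑ e ∈ A, x e) / ((frk M A : ℝ) - (A ∩ B).card) with hq
    set ρ : Finset ℝ := insert (1 : ℝ) (B.image x ∪ 𝓝.image q) with hρ
    have hρne : ρ.Nonempty := ⟨1, Finset.mem_insert_self _ _⟩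
    set ε : ℝ := ρ.min' hρne with hε
    have hε1 : ε ≤ 1 := Finset.min'_le _ _ (Finset.mem_insert_self _ _)
    have hεx : ∀ e ∈ B, ε ≤ x e := fun e he =>
      Finset.min'_le _ _ (Finset.mem_insert_of_mem
        (Finset.mem_union_left _ (Finset.mem_image_of_mem x he)))
    have hεq : ∀ A ∈ 𝓝, ε ≤ q A := fun A hA =>
      Finset.min'_le _ _ (Finset.mem_insert_of_mem
        (Finset.mem_union_right _ (Finset.mem_image_of_mem q hA)))
    have hntlt : ∀ A : Finset α, ¬ Tight M x A → ∑ e ∈ A, x e < (frk M A : ℝ) :=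
      fun A h => lt_of_le_of_ne (hxP A) h
    have hεpos : 0 < ε := by
      rw [hε, Finset.lt_min'_iff]
      intro y hy
      rcases Finset.mem_insert.1 hy with rfl | hy'
      · exact one_pos
      rcases Finset.mem_union.1 hy' with hy'' | hy''
      · obtain ⟨e, heB, rfl⟩ := Finset.mem_image.1 hy''
        exact lt_of_le_of_ne (hx0 e) (Ne.symm (mem_suppF.1 (hBsupp heB)))
      · obtain ⟨A, hA, rfl⟩ := Finset.mem_image.1 hy''
        rw [h𝓝, Finset.mem_filter] at hA
        refine div_pos (by linarith [hntlt A hA.2.1]) ?_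
        have : ((A ∩ B).card : ℝ) < (frk M A : ℝ) := by exact_mod_cast hA.2.2
        linarith
    have hkey : ∀ A : Finset α,
        ∑ e ∈ A, x e - ε * (A ∩ B).card ≤ (1 - ε) * (frk M A : ℝ) := by
      intro A
      by_cases ht : Tight M x A
      · have h1 : ((A ∩ B).card : ℝ) = (frk M A : ℝ) := by exact_mod_cast hBtight A ht
        rw [Tight] at ht
        rw [ht, h1]; exact le_of_eq (by ring)
      · by_cases hc : (A ∩ B).card = frk M A
        · have h1 : ((A ∩ B).card : ℝ) = (frk M A : ℝ) := by exact_mod_cast hc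
          have h2 := hntlt A ht
          rw [h1]; nlinarith
        · have hAN : A ∈ 𝓝 := by
            rw [h𝓝, Finset.mem_filter]
            exact ⟨Finset.mem_univ A, ht, lt_of_le_of_ne (hcardle A) hc⟩
          have h3 := hεq A hAN
          have hd : (0:ℝ) < (frk M A : ℝ) - ((A ∩ B).card : ℝ) := by
            have : ((A ∩ B).card : ℝ) < (frk M A : ℝ) := by
              exact_mod_cast lt_of_le_of_ne (hcardle A) hc
            linarith
          rw [hq, le_div_iff₀ hd] at h3
          nlinarith
    by_cases hε1' : ε = 1
    · -- x is exactly the indicator of B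
      have hxind : ∀ e, x e = if e ∈ B then 1 else 0 := by
        intro e
        by_cases heB : e ∈ B
        · simp only [heB, if_true]
          have h1 : (frk M {e} : ℝ) ≤ 1 := by
            exact_mod_cast (frk_le_card (M := M) {e}).trans_eq (Finset.card_singleton e)
          have h2 := hxP {e}
          rw [Finset.sum_singleton] at h2
          have h3 := hεx e heB
          rw [hε1'] at h3
          linarith
        · simp only [heB, if_false]
          by_contra hne
          have hpos : 0 < x e := lt_of_le_of_ne (hx0 e) (Ne.symm hne)
          have hint : ({e} : Finset α) ∩ B = ∅ := by
            simp [Finset.singleton_inter_of_notMem heB]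
          by_cases ht : Tight M x {e}
          · have := hBtight {e} ht
            rw [hint] at this
            simp only [Finset.card_empty] at this
            rw [Tight, Finset.sum_singleton, ← this] at ht
            simp at ht; linarith
          · have hfrkpos : 0 < frk M {e} := by
              have h2 := hxP {e}
              rw [Finset.sum_singleton] at h2
              have : (0:ℝ) < (frk M {e} : ℝ) := lt_of_lt_of_le hpos h2
              exact_mod_cast this
            have hAN : ({e} : Finset α) ∈ 𝓝 := by
              rw [h𝓝, Finset.mem_filter]
              refine ⟨Finset.mem_univ _, ht, ?_⟩
              rw [hint]; simpa using hfrkpos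
            have h3 := hεq {e} hAN
            rw [hq] at h3
            simp only [hint, Finset.card_empty, Nat.cast_zero, sub_zero,
              Finset.sum_singleton] at h3
            have hfp : (0:ℝ) < (frk M {e} : ℝ) := by exact_mod_cast hfrkpos
            have hlt1 : ((frk M {e} : ℝ) - x e) / (frk M {e} : ℝ) < 1 := by
              rw [div_lt_one hfp]; linarith
            rw [hε1'] at h3; linarith
      exact ⟨1, fun _ => 1, fun _ => B, fun _ => zero_le_one, fun _ => hBind,
        by simp, fun e => by simp [hxind e]⟩
    · -- recurse on y
      have hlt : ε < 1 := lt_of_le_of_ne hε1 hε1'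
      have h1ε : (0:ℝ) < 1 - ε := by linarith
      set y : α → ℝ := fun e => (x e - if e ∈ B then ε else 0) / (1 - ε) with hy
      have hy0 : ∀ e, 0 ≤ y e := by
        intro e; rw [hy]
        refine div_nonneg ?_ h1ε.le
        by_cases heB : e ∈ B
        · simp only [heB, if_true]; linarith [hεx e heB]
        · simp only [heB, if_false]; linarith [hx0 e]
      have hysum : ∀ A : Finset α,
          ∑ e ∈ A, y e = (∑ e ∈ A, x e - ε * (A ∩ B).card) / (1 - ε) := by
        intro A
        rw [hy, ← Finset.sum_div]
        congr 1
        rw [Finset.sum_sub_distrib]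
        congr 1
        rw [Finset.sum_ite_mem, Finset.sum_const, nsmul_eq_mul, mul_comm]
      have hyP : ∀ A : Finset α, ∑ e ∈ A, y e ≤ (frk M A : ℝ) := by
        intro A
        rw [hysum, div_le_iff₀ h1ε]
        calc ∑ e ∈ A, x e - ε * (A ∩ B).card ≤ (1 - ε) * (frk M A : ℝ) := hkey A
          _ = (frk M A : ℝ) * (1 - ε) := by ring
      have htighty : ∀ A : Finset α, Tight M x A → Tight M y A := by
        intro A ht
        have h1 : ((A ∩ B).card : ℝ) = (frk M A : ℝ) := by exact_mod_cast hBtight A ht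
        rw [Tight] at ht ⊢
        rw [hysum, ht, h1]
        field_simp
      have hsuppy : suppF y ⊆ suppF x := by
        intro e he
        rw [mem_suppF] at he ⊢
        by_contra hxe
        have heB : e ∉ B := fun h => (mem_suppF.1 (hBsupp h)) hxe
        apply he
        rw [hy]; simp [heB, hxe]
      have hfilt : (Finset.univ.filter (fun A : Finset α => ¬ Tight M y A)) ⊆
          (Finset.univ.filter (fun A : Finset α => ¬ Tight M x A)) := by
        intro A hA
        rw [Finset.mem_filter] at hA ⊢
        exact ⟨hA.1, fun h => hA.2 (htighty A h)⟩
      -- strict decrease of the measure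
      have hdec : (suppF y).card +
          (Finset.univ.filter (fun A : Finset α => ¬ Tight M y A)).card ≤ n := by
        have hmem := Finset.min'_mem ρ hρne
        rw [← hε] at hmem
        rcases Finset.mem_insert.1 hmem with h1 | h1
        · exact absurd h1 hε1'
        rcases Finset.mem_union.1 h1 with h2 | h2
        · obtain ⟨e0, he0B, he0⟩ := Finset.mem_image.1 h2
          have hy0' : y e0 = 0 := by
            rw [hy]; simp only [he0B, if_true, he0]; simp
          have he0x : e0 ∈ suppF x := hBsupp he0B
          have he0y : e0 ∉ suppF y := fun h => (mem_suppF.1 h) hy0'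
          have hss : suppF y ⊂ suppF x :=
            Finset.ssubset_iff_of_subset hsuppy |>.2 ⟨e0, he0x, he0y⟩
          have := Finset.card_lt_card hss
          have := Finset.card_le_card hfilt
          omega
        · obtain ⟨A0, hA0, hqA0⟩ := Finset.mem_image.1 h2
          rw [h𝓝, Finset.mem_filter] at hA0
          have hd : (0:ℝ) < (frk M A0 : ℝ) - ((A0 ∩ B).card : ℝ) := by
            have : ((A0 ∩ B).card : ℝ) < (frk M A0 : ℝ) := by exact_mod_cast hA0.2.2
            linarith
          have hq' : (frk M A0 : ℝ) - ∑ e ∈ A0, x e = ε * ((frk M A0 : ℝ) - (A0 ∩ B).card) := by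
            rw [← hqA0, hq]
            field_simp
          have hty : Tight M y A0 := by
            rw [Tight, hysum, div_eq_iff h1ε.ne']
            linear_combination -hq'
          have hA0x : A0 ∈ Finset.univ.filter (fun A : Finset α => ¬ Tight M x A) := by
            rw [Finset.mem_filter]; exact ⟨Finset.mem_univ _, hA0.2.1⟩
          have hA0y : A0 ∉ Finset.univ.filter (fun A : Finset α => ¬ Tight M y A) := by
            rw [Finset.mem_filter]; push_neg; intro _; exact hty
          have hss : (Finset.univ.filter (fun A : Finset α => ¬ Tight M y A)) ⊂
              (Finset.univ.filter (fun A : Finset α => ¬ Tight M x A)) :=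
            Finset.ssubset_iff_of_subset hfilt |>.2 ⟨A0, hA0x, hA0y⟩
          have := Finset.card_lt_card hss
          have := Finset.card_le_card hsuppy
          omega
      obtain ⟨m, β, Bs, hb0, hbind, hbsum, hbrepr⟩ := ih y hy0 hyP hdec
      refine ⟨m + 1, Fin.cons ε (fun i => (1 - ε) * β i), Fin.cons B Bs, ?_, ?_, ?_, ?_⟩
      · intro i
        refine Fin.cases ?_ ?_ i
        · simpa using hεpos.le
        · intro j; simp only [Fin.cons_succ]; exact mul_nonneg h1ε.le (hb0 j)
      · intro i
        refine Fin.cases ?_ ?_ i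
        · simpa using hBind
        · intro j; simpa using hbind j
      · rw [Fin.sum_cons, ← Finset.mul_sum, hbsum]; ring
      · intro e
        have h3 : (1 - ε) * y e = x e - (if e ∈ B then ε else 0) := by
          rw [hy, mul_comm, div_mul_cancel₀ _ h1ε.ne']
        rw [Fin.sum_univ_succ]
        simp only [Fin.cons_zero, Fin.cons_succ]
        have h2 : ∑ i, (1 - ε) * β i * (if e ∈ Bs i then (1:ℝ) else 0) = (1 - ε) * y e := by
          rw [hbrepr e, Finset.mul_sum]
          exact Finset.sum_congr rfl (fun i _ => by ring)
        rw [h2, h3]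
        by_cases heB : e ∈ B <;> simp [heB]


end MPD

/-- Any point `x` of the matroid polytope `P(M)` is a convex combination of characteristic
vectors of independent sets of `M`. -/
theorem matroid_polytope_decomposition {α : Type*} [Fintype α] [DecidableEq α] (M : Matroid α)
    (x : α → ℝ) (hx0 : ∀ e, 0 ≤ x e)
    (hxP : ∀ A : Finset α, ∑ e ∈ A, x e ≤ (matroidRank M (A : Set α) : ℝ)) :
    ∃ (m : ℕ) (β : Fin m → ℝ) (B : Fin m → Finset α),
      (∀ i, 0 ≤ β i) ∧ (∀ i, M.Indep (B i : Set α)) ∧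
      (∑ i, β i = 1) ∧
      ∀ e, x e = ∑ i, β i * (if e ∈ B i then (1 : ℝ) else 0) := by
  exact MPD.main_aux _ x hx0 hxP le_rfl
end

section
/- Let (S^t), (Z^t), (Y^t) be {0,1}-valued adapted processes with Y^t = 1 − S^t − Z^t, S^0 = 0, Y^0 = 1, such that ((1+λ)·S^t + Y^t)_{t=0}^n is a submartingale. Let τ = min{ t : Y^t = 0 } and suppose τ ≤ n almost surely. Then E[S^τ] ≥ 1/(1+λ). -/
open MeasureTheory

/-- Via Doob's optional stopping theorem: if `((1+λ)·S_t + Y_t)` is a submartingale,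
`S_0 = 0`, `Y_0 = 1`, and `τ` is the first time the fate of the element is revealed
(`Y_τ = 0`), with `τ ≤ n`, then `E[S_τ] ≥ 1/(1+λ)`. -/
theorem probability_of_acceptance {Ω : Type*} [m0 : MeasurableSpace Ω]
    (μ : Measure Ω) [IsProbabilityMeasure μ]
    (n : ℕ) (ℱ : Filtration ℕ m0) (lam : ℝ) (hlam : 0 ≤ lam)
    (S Z Y : ℕ → Ω → ℝ)
    (hS01 : ∀ t ω, S t ω = 0 ∨ S t ω = 1)
    (hZ01 : ∀ t ω, Z t ω = 0 ∨ Z t ω = 1)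
    (hY : ∀ t ω, Y t ω = 1 - S t ω - Z t ω)
    (hS0 : ∀ ω, S 0 ω = 0) (hY0 : ∀ ω, Y 0 ω = 1)
    (hsub : Submartingale (fun t ω => (1 + lam) * S t ω + Y t ω) ℱ μ)
    (τ : Ω → ℕ) (hτ : IsStoppingTime ℱ (fun ω => (τ ω : WithTop ℕ))) (hτn : ∀ ω, τ ω ≤ n)
    (hτstop : ∀ ω, Y (τ ω) ω = 0)
    (hτmin : ∀ ω, ∀ t < τ ω, Y t ω ≠ 0) :
    1 / (1 + lam) ≤ ∫ ω, S (τ ω) ω ∂μ := by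
  have hpos : (0:ℝ) < 1 + lam := by linarith
  set f : ℕ → Ω → ℝ := fun t ω => (1 + lam) * S t ω + Y t ω with hf
  have h0 : IsStoppingTime ℱ (fun _ : Ω => 0) := isStoppingTime_const ℱ 0
  have hmono := hsub.expected_stoppedValue_mono h0 hτ (fun ω => WithTop.coe_le_coe.mpr (Nat.zero_le _)) (fun ω => WithTop.coe_le_coe.mpr (hτn ω))
  have hSv : ∀ ω, stoppedValue f (fun ω => (τ ω : WithTop ℕ)) ω = (1 + lam) * S (τ ω) ω := by
    intro ω; show (1 + lam) * S (τ ω) ω + Y (τ ω) ω = _; simp [hτstop ω]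
  have h0v : ∀ ω, stoppedValue f (fun _ => 0) ω = 1 := by
    intro ω; simp [stoppedValue, hf, hS0 ω, hY0 ω]
  have hint : Integrable (stoppedValue f (fun ω => (τ ω : WithTop ℕ))) μ :=
    hsub.integrable_stoppedValue hτ (fun ω => WithTop.coe_le_coe.mpr (hτn ω))
  have h1 : (∫ ω, stoppedValue f (fun _ => 0) ω ∂μ) = 1 := by
    rw [integral_congr_ae (Filter.Eventually.of_forall h0v)]; simp
  have : (1:ℝ) ≤ (1 + lam) * ∫ ω, S (τ ω) ω ∂μ := by
    calc (1:ℝ) = ∫ ω, stoppedValue f (fun _ => 0) ω ∂μ := h1.symm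
    _ ≤ ∫ ω, stoppedValue f (fun ω => (τ ω : WithTop ℕ)) ω ∂μ := hmono
    _ = ∫ ω, (1 + lam) * S (τ ω) ω ∂μ :=
        integral_congr_ae (Filter.Eventually.of_forall hSv)
    _ = (1 + lam) * ∫ ω, S (τ ω) ω ∂μ := integral_const_mul _ _
  rw [div_le_iff₀ hpos]
  linarith [this]
end

section
/- Let f : 2^E → ℝ_{≥0} be a nonnegative submodular function and let E = E₁^i ⊎ E₂^i be q partitions of E, for i ∈ {1,…,q}. Let ρ₁,…,ρ_q be i.i.d. uniform on {1,2}. Then for every A ⊆ E, E[f(A ∩ E_{ρ₁}^1 ∩ ⋯ ∩ E_{ρ_q}^q)] ≥ f(A)/2^q. -/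
theorem aux_submod {α : Type*} [Fintype α] [DecidableEq α]
    (f : Finset α → ℝ)
    (hsub : ∀ S T, f (S ∪ T) + f (S ∩ T) ≤ f S + f T)
    (hnonneg : ∀ S, 0 ≤ f S) :
    ∀ (q : ℕ) (E₁ E₂ : Fin q → Finset α),
      (∀ i, E₁ i ∪ E₂ i = Finset.univ) → (∀ i, Disjoint (E₁ i) (E₂ i)) →
      ∀ A : Finset α,
        f A ≤ ∑ ρ : Fin q → Bool,
          f (A ∩ Finset.univ.inf fun i => if ρ i then E₁ i else E₂ i) := by
  intro q
  induction q with
  | zero =>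
    intro E₁ E₂ _ _ A
    simp
  | succ n ih =>
    intro E₁ E₂ hcover hdisj A
    have hsplit : ∀ A : Finset α, f A ≤ f (A ∩ E₁ 0) + f (A ∩ E₂ 0) := by
      intro A
      have h1 : (A ∩ E₁ 0) ∪ (A ∩ E₂ 0) = A := by
        rw [← Finset.inter_union_distrib_left, hcover 0, Finset.inter_univ]
      have h2 : (A ∩ E₁ 0) ∩ (A ∩ E₂ 0) = ∅ := by
        have := (hdisj 0).mono (Finset.inter_subset_right (s₁ := A))
          (Finset.inter_subset_right (s₁ := A))
        exact Finset.disjoint_iff_inter_eq_empty.mp this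
      have := hsub (A ∩ E₁ 0) (A ∩ E₂ 0)
      rw [h1, h2] at this
      linarith [hnonneg (∅ : Finset α)]
    -- rewrite the sum over Fin (n+1) → Bool
    have hsum : ∑ ρ : Fin (n+1) → Bool,
        f (A ∩ Finset.univ.inf fun i => if ρ i then E₁ i else E₂ i)
      = ∑ p : Bool × (Fin n → Bool),
        f ((A ∩ (if p.1 then E₁ 0 else E₂ 0)) ∩
          Finset.univ.inf fun i : Fin n => if p.2 i then E₁ i.succ else E₂ i.succ) := by
      refine (Fintype.sum_equiv (Fin.consEquiv fun _ => Bool) _ _ ?_).symm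
      rintro ⟨b, ρ'⟩
      congr 1
      rw [Fin.univ_succ, Finset.inf_cons, Finset.inf_map, Finset.inter_assoc]
      simp [Fin.cons_succ, Function.comp_def]
    rw [hsum, Fintype.sum_prod_type, Fintype.sum_bool]
    calc f A ≤ f (A ∩ E₁ 0) + f (A ∩ E₂ 0) := hsplit A
      _ ≤ _ := by
        gcongr
        · simpa using ih (fun i => E₁ i.succ) (fun i => E₂ i.succ)
            (fun i => hcover i.succ) (fun i => hdisj i.succ) (A ∩ E₁ 0)
        · simpa using ih (fun i => E₁ i.succ) (fun i => E₂ i.succ)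
            (fun i => hcover i.succ) (fun i => hdisj i.succ) (A ∩ E₂ 0)

/-- For a nonnegative submodular `f` and `q` partitions `E = E₁^i ⊎ E₂^i`, with each side
chosen independently and uniformly at random,
`E[f(A ∩ E_{ρ₁}^1 ∩ ⋯ ∩ E_{ρ_q}^q)] ≥ f(A)/2^q`. -/
theorem submodular_random_partitions {α : Type*} [Fintype α] [DecidableEq α] (q : ℕ)
    (f : Finset α → ℝ)
    (hsub : ∀ S T, f (S ∪ T) + f (S ∩ T) ≤ f S + f T)
    (hnonneg : ∀ S, 0 ≤ f S)
    (E₁ E₂ : Fin q → Finset α)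
    (hcover : ∀ i, E₁ i ∪ E₂ i = Finset.univ)
    (hdisj : ∀ i, Disjoint (E₁ i) (E₂ i))
    (A : Finset α) :
    f A / 2 ^ q ≤
      (∑ ρ : Fin q → Bool,
        f (A ∩ Finset.univ.inf fun i => if ρ i then E₁ i else E₂ i)) / 2 ^ q := by
  have := aux_submod f hsub hnonneg q E₁ E₂ hcover hdisj A
  gcongr
end

section
/- Let f : 2^E → ℝ_{≥0} be submodular and a ∈ [0,1]. Let x ∈ [0,1]^E with x_e ≤ a for all e, and let F be the multilinear extension of f. Then for every S ⊆ E, F(x ∨ 1_S) ≥ (1 − a)·f(S), where ∨ denotes coordinate-wise maximum. -/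
/-- The multilinear extension of a set function `f`. -/
noncomputable def multilinearExtension {α : Type*} [Fintype α] [DecidableEq α]
    (f : Finset α → ℝ) (y : α → ℝ) : ℝ :=
  ∑ A : Finset α, f A * ((∏ e ∈ A, y e) * ∏ e ∈ Aᶜ, (1 - y e))

namespace MLAux

open Finset

variable {α : Type*} [DecidableEq α]

/-- Multilinear extension restricted to the ground set `U`. -/
noncomputable def G (U : Finset α) (f : Finset α → ℝ) (x : α → ℝ) : ℝ :=
  ∑ A ∈ U.powerset, f A * ((∏ e ∈ A, x e) * ∏ e ∈ U \ A, (1 - x e))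

lemma powerset_nonempty' (U : Finset α) : U.powerset.Nonempty :=
  ⟨∅, by simp⟩

/-- Minimum of `f` over subsets of `U`. -/
noncomputable def M (U : Finset α) (f : Finset α → ℝ) : ℝ :=
  U.powerset.inf' (powerset_nonempty' U) f

lemma M_le {U A : Finset α} (f : Finset α → ℝ) (h : A ⊆ U) : M U f ≤ f A :=
  inf'_le _ (mem_powerset.2 h)

lemma exists_M (U : Finset α) (f : Finset α → ℝ) : ∃ T, T ⊆ U ∧ M U f = f T := by
  obtain ⟨T, hT, h⟩ := Finset.exists_mem_eq_inf' (powerset_nonempty' U) f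
  exact ⟨T, mem_powerset.1 hT, h⟩

lemma G_empty (f : Finset α → ℝ) (x : α → ℝ) : G ∅ f x = f ∅ := by
  simp [G]

lemma G_insert {U : Finset α} {e : α} (he : e ∉ U) (f : Finset α → ℝ) (x : α → ℝ) :
    G (insert e U) f x
      = (1 - x e) * G U f x + x e * G U (fun A => f (insert e A)) x := by
  unfold G
  rw [Finset.sum_powerset_insert he, Finset.mul_sum, Finset.mul_sum]
  congr 1
  · refine Finset.sum_congr rfl fun A hA => ?_
    rw [mem_powerset] at hA
    have heA : e ∉ A := fun h => he (hA h)
    have h1 : insert e U \ A = insert e (U \ A) := by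
      ext u
      simp only [mem_sdiff, mem_insert]
      constructor
      · rintro ⟨hu1 | hu1, hu2⟩
        · exact Or.inl hu1
        · exact Or.inr ⟨hu1, hu2⟩
      · rintro (rfl | ⟨hu1, hu2⟩)
        · exact ⟨Or.inl rfl, heA⟩
        · exact ⟨Or.inr hu1, hu2⟩
    have h2 : e ∉ U \ A := by simp [he]
    rw [h1, Finset.prod_insert h2]
    ring
  · refine Finset.sum_congr rfl fun A hA => ?_
    rw [mem_powerset] at hA
    have heA : e ∉ A := fun h => he (hA h)
    have h1 : insert e U \ insert e A = U \ A := by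
      ext u
      simp only [mem_sdiff, mem_insert]
      constructor
      · rintro ⟨hu1 | hu1, hu2⟩
        · exact absurd (Or.inl hu1) hu2
        · exact ⟨hu1, fun h => hu2 (Or.inr h)⟩
      · rintro ⟨hu1, hu2⟩
        exact ⟨Or.inr hu1, by rintro (rfl | h); exacts [he hu1, hu2 h]⟩
    rw [h1, Finset.prod_insert heA]
    ring

/-- The key induction: for nonneg? (not needed) submodular `f` and `x ∈ [0,a]` on `U`,
`G U f x ≥ f ∅ - a (f ∅ - min f)`. -/
lemma key (a : ℝ) (ha0 : 0 ≤ a) (ha1 : a ≤ 1) (x : α → ℝ) :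
    ∀ (U : Finset α) (f : Finset α → ℝ),
      (∀ A B, f (A ∪ B) + f (A ∩ B) ≤ f A + f B) →
      (∀ e ∈ U, 0 ≤ x e ∧ x e ≤ a) →
      f ∅ - a * (f ∅ - M U f) ≤ G U f x := by
  intro U
  induction U using Finset.induction_on with
  | empty =>
      intro f hsub hx
      have hM : M ∅ f = f ∅ := by simp [M]
      rw [G_empty, hM]
      ring_nf
      simp
  | insert e U he ih =>
      intro f hsub hx
      have hxe := hx e (mem_insert_self e U)
      have hxU : ∀ u ∈ U, 0 ≤ x u ∧ x u ≤ a := fun u hu => hx u (mem_insert_of_mem hu)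
      set fe : Finset α → ℝ := fun A => f (insert e A) with hfe
      have hsubfe : ∀ A B, fe (A ∪ B) + fe (A ∩ B) ≤ fe A + fe B := by
        intro A B
        have h := hsub (insert e A) (insert e B)
        have h1 : insert e A ∪ insert e B = insert e (A ∪ B) := by
          ext u; simp only [mem_union, mem_insert]; tauto
        have h2 : insert e A ∩ insert e B = insert e (A ∩ B) := by
          ext u; simp only [mem_inter, mem_insert]; tauto
        rw [h1, h2] at h
        simpa [hfe] using h
      have h0 := ih f hsub hxU
      have h1 := ih fe hsubfe hxU
      -- key submodularity fact: M U fe ≤ M U f + fe ∅ - f ∅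
      obtain ⟨T₀, hT₀U, hT₀⟩ := exists_M U f
      have hK : M U fe ≤ M U f + fe ∅ - f ∅ := by
        have hMle : M U fe ≤ fe T₀ := M_le fe hT₀U
        have hsm := hsub T₀ {e}
        have hu : T₀ ∪ {e} = insert e T₀ := by
          ext u; simp only [mem_union, mem_insert, mem_singleton]; tauto
        have hi : T₀ ∩ {e} = ∅ := by
          ext u
          simp only [mem_inter, mem_singleton, notMem_empty, iff_false, not_and]
          rintro hu2 rfl; exact he (hT₀U hu2)
        rw [hu, hi] at hsm
        have hfeT : fe T₀ = f (insert e T₀) := rfl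
        have hfee : fe ∅ = f {e} := by simp [hfe]
        rw [hT₀, hfee]
        linarith [hsm, hMle]
      -- bounds on M (insert e U) f
      have hmI0 : M (insert e U) f ≤ M U f := by
        rw [hT₀]
        exact M_le f (hT₀U.trans (subset_insert e U))
      have hmI1 : M (insert e U) f ≤ M U fe := by
        obtain ⟨T₁, hT₁U, hT₁⟩ := exists_M U fe
        rw [hT₁]
        exact M_le f (insert_subset_insert e hT₁U)
      rw [G_insert he]
      set c := f ∅
      set d := fe ∅
      set m₀ := M U f
      set m₁ := M U fe
      set mI := M (insert e U) f
      have hG0 : (1 - x e) * (c - a * (c - m₀)) ≤ (1 - x e) * G U f x :=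
        mul_le_mul_of_nonneg_left h0 (by linarith [hxe.2])
      have hG1 : x e * (d - a * (d - m₁)) ≤ x e * G U fe x :=
        mul_le_mul_of_nonneg_left h1 hxe.1
      have harith : c - a * (c - mI) ≤
          (1 - x e) * (c - a * (c - m₀)) + x e * (d - a * (d - m₁)) := by
        rcases le_or_gt c d with hcd | hcd
        · have e1 : 0 ≤ x e * (1 - a) * (d - c) :=
            mul_nonneg (mul_nonneg hxe.1 (by linarith)) (by linarith)
          have e2 : 0 ≤ a * ((1 - x e) * (m₀ - mI) + x e * (m₁ - mI)) := by
            apply mul_nonneg ha0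
            have := hxe.1; have := hxe.2
            nlinarith [hmI0, hmI1]
          nlinarith [e1, e2]
        · have hm : m₀ - m₁ ≥ c - d := by linarith [hK]
          have e1 : 0 ≤ (c - d) * (a - x e) :=
            mul_nonneg (by linarith) (by linarith [hxe.2])
          have e2 : 0 ≤ a * (1 - x e) * ((m₀ - m₁) - (c - d)) :=
            mul_nonneg (mul_nonneg ha0 (by linarith [hxe.2])) (by linarith)
          have e3 : 0 ≤ a * (m₁ - mI) := mul_nonneg ha0 (by linarith [hmI1])
          nlinarith [e1, e2, e3]
      linarith [hG0, hG1, harith]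

end MLAux

/-- Feldman–Naor–Schwartz Lemma 3.5: if `x_e ≤ a` for all `e`, then for every `S`,
`F(x ∨ 1_S) ≥ (1 − a)·f(S)`. -/
theorem multilinear_lower_bound {α : Type*} [Fintype α] [DecidableEq α]
    (f : Finset α → ℝ)
    (hsub : ∀ A B, f (A ∪ B) + f (A ∩ B) ≤ f A + f B)
    (hnonneg : ∀ A, 0 ≤ f A)
    (a : ℝ) (ha : 0 ≤ a ∧ a ≤ 1)
    (x : α → ℝ) (hx : ∀ e, 0 ≤ x e ∧ x e ≤ a)
    (S : Finset α) :
    (1 - a) * f S ≤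
      multilinearExtension f (fun e => max (x e) (if e ∈ S then 1 else 0)) := by
  classical
  open Finset in
  set y : α → ℝ := fun e => max (x e) (if e ∈ S then 1 else 0) with hy
  have hyS : ∀ e ∈ S, y e = 1 := by
    intro e heS
    simp only [hy, heS, if_pos]
    exact max_eq_right ((hx e).2.trans ha.2)
  have hyn : ∀ e ∉ S, y e = x e := by
    intro e heS
    simp only [hy, heS, if_neg, not_false_iff]
    exact max_eq_left (hx e).1
  set g : Finset α → ℝ := fun B => f (S ∪ B) with hg
  -- step 1: the multilinear extension at y equals G Sᶜ g x
  have hEq : multilinearExtension f y = MLAux.G Sᶜ g x := by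
    unfold multilinearExtension MLAux.G
    have hzero : ∀ A ∈ (Finset.univ : Finset (Finset α)),
        f A * ((∏ e ∈ A, y e) * ∏ e ∈ Aᶜ, (1 - y e)) ≠ 0 → S ⊆ A := by
      intro A _ hne
      by_contra hSA
      obtain ⟨s₀, hs₀S, hs₀A⟩ := Finset.not_subset.1 hSA
      have : ∏ e ∈ Aᶜ, (1 - y e) = 0 := by
        apply Finset.prod_eq_zero (Finset.mem_compl.2 hs₀A)
        rw [hyS s₀ hs₀S]; ring
      apply hne
      rw [this]; ring
    rw [← Finset.sum_filter_of_ne hzero]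
    refine Finset.sum_nbij' (fun A => A \ S) (fun B => S ∪ B) ?_ ?_ ?_ ?_ ?_
    · intro A hA
      rw [Finset.mem_filter] at hA
      rw [Finset.mem_powerset]
      intro u hu
      rw [Finset.mem_sdiff] at hu
      exact Finset.mem_compl.2 hu.2
    · intro B hB
      simp
    · intro A hA
      rw [Finset.mem_filter] at hA
      exact Finset.union_sdiff_of_subset hA.2
    · intro B hB
      rw [Finset.mem_powerset] at hB
      ext u
      simp only [Finset.mem_sdiff, Finset.mem_union]
      constructor
      · rintro ⟨hu1 | hu1, hu2⟩
        · exact absurd hu1 hu2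
        · exact hu1
      · intro hu
        exact ⟨Or.inr hu, fun h => (Finset.mem_compl.1 (hB hu)) h⟩
    · intro A hA
      rw [Finset.mem_filter] at hA
      have hSA := hA.2
      have hfA : f A = g (A \ S) := by
        rw [hg]; simp only []
        rw [Finset.union_sdiff_of_subset hSA]
      have hprod1 : ∏ e ∈ A, y e = ∏ e ∈ A \ S, x e := by
        rw [← Finset.prod_sdiff hSA]
        have h1 : ∏ e ∈ S, y e = 1 := Finset.prod_eq_one hyS
        have h2 : ∏ e ∈ A \ S, y e = ∏ e ∈ A \ S, x e :=
          Finset.prod_congr rfl fun e heA =>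
            hyn e (Finset.mem_sdiff.1 heA).2
        rw [h1, h2, mul_one]
      have hcompl : Aᶜ = Sᶜ \ (A \ S) := by
        ext u
        simp only [Finset.mem_compl, Finset.mem_sdiff]
        constructor
        · intro hu
          exact ⟨fun h => hu (hSA h), fun h => hu h.1⟩
        · intro hu huA
          rcases Finset.mem_sdiff.1 (Finset.mem_sdiff.2 ⟨huA, hu.1⟩) with ⟨h1, h2⟩
          exact hu.2 ⟨h1, h2⟩
      have hprod2 : ∏ e ∈ Aᶜ, (1 - y e) = ∏ e ∈ Sᶜ \ (A \ S), (1 - x e) := by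
        rw [hcompl]
        refine Finset.prod_congr rfl fun e heA => ?_
        have : e ∉ S := Finset.mem_compl.1 (Finset.mem_sdiff.1 heA).1
        rw [hyn e this]
      rw [hfA, hprod1, hprod2]
  rw [hEq]
  -- step 2: g is submodular
  have hsubg : ∀ A B, g (A ∪ B) + g (A ∩ B) ≤ g A + g B := by
    intro A B
    have h := hsub (S ∪ A) (S ∪ B)
    have h1 : (S ∪ A) ∪ (S ∪ B) = S ∪ (A ∪ B) := by
      ext u; simp only [Finset.mem_union]; tauto
    have h2 : (S ∪ A) ∩ (S ∪ B) = S ∪ (A ∩ B) := by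
      ext u; simp only [Finset.mem_union, Finset.mem_inter]; tauto
    rw [h1, h2] at h
    simpa [hg] using h
  have hkey := MLAux.key a ha.1 ha.2 x Sᶜ g hsubg (fun e _ => hx e)
  have hg0 : g ∅ = f S := by simp [hg]
  have hM0 : 0 ≤ MLAux.M Sᶜ g := by
    obtain ⟨T, _, hT⟩ := MLAux.exists_M Sᶜ g
    rw [hT]; exact hnonneg _
  rw [hg0] at hkey
  nlinarith [hkey, hM0, ha.1]
end

section
/- In the first-attempt single-client menu: items c ∈ J with prices p are each independently placed in the menu with probability (1/2)·x_{c,p} and have nonnegative utility with probability P[v_c ≥ p], where Σ_{d∈J} Σ_p x_{d,p}·P[v_d ≥ p] ≤ 1. Then for a fixed item c, the probability that c is placed in the menu with a nonnegative-utility price while no other item d ≠ c is, is at least (1/4)·Σ_p x_{c,p}·P[v_c ≥ p]. -/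
lemma weierstrass {J : Type*} [DecidableEq J] (s : Finset J) (f : J → ℝ)
    (h0 : ∀ i ∈ s, 0 ≤ f i) (h1 : ∀ i ∈ s, f i ≤ 1) :
    1 - ∑ i ∈ s, f i ≤ ∏ i ∈ s, (1 - f i) := by
  induction s using Finset.induction with
  | empty => simp
  | @insert a s ha ih =>
    rw [Finset.sum_insert ha, Finset.prod_insert ha]
    have h0' : ∀ i ∈ s, 0 ≤ f i := fun i hi => h0 i (Finset.mem_insert_of_mem hi)
    have h1' : ∀ i ∈ s, f i ≤ 1 := fun i hi => h1 i (Finset.mem_insert_of_mem hi)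
    have hS : 0 ≤ ∑ i ∈ s, f i := Finset.sum_nonneg h0'
    have hfa0 : 0 ≤ f a := h0 a (Finset.mem_insert_self a s)
    have hfa1 : f a ≤ 1 := h1 a (Finset.mem_insert_self a s)
    have := mul_le_mul_of_nonneg_left (ih h0' h1') (by linarith : (0:ℝ) ≤ 1 - f a)
    nlinarith [mul_nonneg hfa0 hS]

/-- First-attempt single-client menu: each item `d` is independently offered with a
nonnegative-utility price with probability `(1/2)·∑_p x_{d,p}·P[v_d ≥ p]`, and these
probabilities sum to at most `1/2`. Then the probability that a fixed item `c` is offered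
with a nonnegative-utility price while no other item is, namely
`r_c · ∏_{d ≠ c} (1 − r_d)`, is at least `(1/4)·∑_p x_{c,p}·P[v_c ≥ p]`. -/
theorem single_client_first_attempt {J P : Type*} [Fintype J] [Fintype P] [DecidableEq J]
    (x w : J → P → ℝ)
    (hx : ∀ d p, 0 ≤ x d p)
    (hw : ∀ d p, 0 ≤ w d p ∧ w d p ≤ 1)
    (hmenu : ∀ d, ∑ p, x d p ≤ 1)
    (htot : ∑ d, ∑ p, x d p * w d p ≤ 1)
    (c : J) :
    (1 / 4) * ∑ p, x c p * w c p ≤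
      ((1 / 2) * ∑ p, x c p * w c p) *
        ∏ d ∈ Finset.univ.erase c, (1 - (1 / 2) * ∑ p, x d p * w d p) := by
  set S : J → ℝ := fun d => ∑ p, x d p * w d p with hS
  have hSnn : ∀ d, 0 ≤ S d := fun d =>
    Finset.sum_nonneg fun p _ => mul_nonneg (hx d p) ((hw d p).1)
  have hSle : ∀ d, S d ≤ 1 := fun d =>
    le_trans (Finset.sum_le_sum fun p _ => by
      nlinarith [(hw d p).1, (hw d p).2, hx d p]) (hmenu d)
  have hsum : ∑ d ∈ Finset.univ.erase c, (1/2) * S d ≤ 1/2 := by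
    have : ∑ d ∈ Finset.univ.erase c, S d ≤ 1 := by
      refine le_trans ?_ htot
      exact Finset.sum_le_sum_of_subset_of_nonneg (Finset.erase_subset _ _)
        (fun i _ _ => hSnn i)
    rw [← Finset.mul_sum]; linarith
  have hprod : (1/2 : ℝ) ≤ ∏ d ∈ Finset.univ.erase c, (1 - (1/2) * S d) := by
    have := weierstrass (Finset.univ.erase c) (fun d => (1/2) * S d)
      (fun i _ => by linarith [hSnn i]) (fun i _ => by linarith [hSle i])
    linarith
  have hprodnn : (0:ℝ) ≤ ∏ d ∈ Finset.univ.erase c, (1 - (1/2) * S d) := by linarith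
  calc (1/4) * S c = ((1/2) * S c) * (1/2 : ℝ) := by ring
    _ ≤ ((1/2) * S c) * ∏ d ∈ Finset.univ.erase c, (1 - (1/2) * S d) :=
        mul_le_mul_of_nonneg_left hprod (by linarith [hSnn c])
end
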